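/- (Appendix A ordering of optimal force ratios) Let q satisfy 2√2/3 < q < 1. Then the six optimal force ratios are strictly ordered: x_mdf < x_Mη < x_MEF < x_MΩ < x_MPη < x_MPO < 0; equivalently, their absolute values satisfy q/2 < |x_MPη| < |x_MΩ| < 3q/4 < q/(1 + √(1 − q²)) < q, so the Euclidean distances of the corresponding points (X₁, X₂) from the equilibrium state (0,0) at fixed X₂ are strictly ordered in the same way. -/

import Mathlib

/-- Optimal force ratio for minimum dissipation function: `x_mdf = −q`. -/
noncomputable def xmdf (q : ℝ) : ℝ := -q

/-- Optimal force ratio for maximum power output: `x_MPO = −q/2`. -/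
noncomputable def xMPO (q : ℝ) : ℝ := -q / 2

/-- Optimal force ratio for maximum efficiency: `x_Mη = −q/(1 + √(1 − q²))`. -/
noncomputable def xMeta (q : ℝ) : ℝ := -q / (1 + Real.sqrt (1 - q ^ 2))

/-- Optimal force ratio for maximum ecological function: `x_MEF = −3q/4`. -/
noncomputable def xMEF (q : ℝ) : ℝ := -(3 * q) / 4

/-- Optimal force ratio for maximum omega function:
`x_MΩ = −q·(4 − q² + 4√(1 − q²))/(4·(1 + √(1 − q²))²)`. -/
noncomputable def xMOmega (q : ℝ) : ℝ :=
  -(q * (4 - q ^ 2 + 4 * Real.sqrt (1 - q ^ 2))) / (4 * (1 + Real.sqrt (1 - q ^ 2)) ^ 2)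

/-- Optimal force ratio for maximum efficient power:
`x_MPη = −(4 + q² − √(16 − 16q² + q⁴))/(6q)`. -/
noncomputable def xMPeta (q : ℝ) : ℝ :=
  -(4 + q ^ 2 - Real.sqrt (16 - 16 * q ^ 2 + q ^ 4)) / (6 * q)

/-- Euclidean distance from the equilibrium state `(0,0)` to the point `(X₁, X₂)` on the
operating line `X₁ = √(L₂₂/L₁₁)·x·X₂` of the regime with optimal force ratio `x`. -/
noncomputable def distEq (L11 L22 X2 x : ℝ) : ℝ :=
  Real.sqrt ((Real.sqrt (L22 / L11) * x * X2) ^ 2 + X2 ^ 2)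

/-! With `s = √(1 - q²)` one has `q² = 1 - s²`, so every comparison becomes a polynomial
inequality in `s ∈ (0, 1/3)`; e.g. `x_MΩ` simplifies to `-q (3 + s) / (4 (1 + s))`. All six ratios
are negative, so their absolute values, and with them the distances `distEq`, are ordered in
reverse. -/

lemma abs_lt_abs_of_lt_of_neg {α : Type*} [AddCommGroup α] [LinearOrder α] [IsOrderedAddMonoid α]
    {a b : α} (hab : a < b) (hb : b < 0) : |b| < |a| := by
  rw [abs_of_neg hb, abs_of_neg (hab.trans hb)]
  exact neg_lt_neg hab

lemma distEq_lt_distEq {L11 L22 X2 x y : ℝ} (h11 : 0 < L11) (h22 : 0 < L22) (hX : X2 ≠ 0)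
    (hxy : |x| < |y|) : distEq L11 L22 X2 x < distEq L11 L22 X2 y := by
  have hcX : 0 < (√(L22 / L11) * X2) ^ 2 := by positivity
  unfold distEq
  apply Real.sqrt_lt_sqrt (by positivity)
  apply add_lt_add_left
  calc (√(L22 / L11) * x * X2) ^ 2 = (√(L22 / L11) * X2) ^ 2 * x ^ 2 := by ring
    _ < (√(L22 / L11) * X2) ^ 2 * y ^ 2 := mul_lt_mul_of_pos_left (sq_lt_sq.mpr hxy) hcX
    _ = (√(L22 / L11) * y * X2) ^ 2 := by ring

lemma sqrt_one_sub_sq_lt_third {q : ℝ} (hq : 2 * √2 / 3 < q) : √(1 - q ^ 2) < 1 / 3 := by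
  have h8 : 8 / 9 < q ^ 2 := by
    have h2 : (2 * √2 / 3) ^ 2 = 8 / 9 := by rw [div_pow, mul_pow, Real.sq_sqrt] <;> norm_num
    rw [← h2]
    exact pow_lt_pow_left₀ hq (by positivity) two_ne_zero
  rw [Real.sqrt_lt' (by norm_num)]
  linarith

lemma xMOmega_eq {q : ℝ} (hq : q ^ 2 ≤ 1) :
    xMOmega q = -(q * (3 + √(1 - q ^ 2))) / (4 * (1 + √(1 - q ^ 2))) := by
  have hs : √(1 - q ^ 2) ^ 2 = 1 - q ^ 2 := Real.sq_sqrt (by linarith)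
  have hs0 : 0 ≤ √(1 - q ^ 2) := Real.sqrt_nonneg _
  rw [xMOmega, div_eq_div_iff (by positivity) (by positivity)]
  linear_combination (4 * q) * (1 + √(1 - q ^ 2)) * hs

lemma xmdf_lt_xMeta {q : ℝ} (hq : 0 < q) (hq1 : q < 1) : xmdf q < xMeta q := by
  have hs : 0 < √(1 - q ^ 2) := Real.sqrt_pos.mpr (by nlinarith)
  rw [xmdf, xMeta, neg_div, neg_lt_neg_iff, div_lt_iff₀ (by positivity)]
  nlinarith

lemma xMeta_lt_xMEF {q : ℝ} (hq : 2 * √2 / 3 < q) : xMeta q < xMEF q := by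
  have hs := sqrt_one_sub_sq_lt_third hq
  have hq0 : 0 < q := lt_trans (by positivity) hq
  rw [xMeta, xMEF, neg_div, neg_div, neg_lt_neg_iff, div_lt_div_iff₀ (by norm_num) (by positivity)]
  nlinarith

lemma xMEF_lt_xMOmega {q : ℝ} (hq : 0 < q) (hq1 : q < 1) : xMEF q < xMOmega q := by
  have hs : 0 < √(1 - q ^ 2) := Real.sqrt_pos.mpr (by nlinarith)
  rw [xMOmega_eq (by nlinarith), xMEF, neg_div, neg_div, neg_lt_neg_iff,
    div_lt_div_iff₀ (by positivity) (by norm_num)]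
  nlinarith [mul_pos hq hs]

lemma xMOmega_lt_xMPeta {q : ℝ} (hq : 0 < q) (hq1 : q < 1) : xMOmega q < xMPeta q := by
  set s := √(1 - q ^ 2)
  set r := √(16 - 16 * q ^ 2 + q ^ 4)
  have hs : s ^ 2 = 1 - q ^ 2 := Real.sq_sqrt (by nlinarith)
  have hs0 : 0 ≤ s := Real.sqrt_nonneg _
  have hs1 : s < 1 := by nlinarith
  have hr : r ^ 2 = 16 - 16 * q ^ 2 + q ^ 4 := Real.sq_sqrt (by nlinarith)
  -- `4 r ^ 2 - (1 + 6 s + s ^ 2) ^ 2 = 3 (1 - s) ^ 4` once `q ^ 2 = 1 - s ^ 2`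
  have key : 1 + 6 * s + s ^ 2 < 2 * r := by
    refine lt_of_pow_lt_pow_left₀ 2 (by positivity) ?_
    have hq2 : q ^ 2 = 1 - s ^ 2 := by linarith
    nlinarith [pow_pos (sub_pos.mpr hs1) 4]
  rw [xMOmega_eq (by nlinarith), xMPeta, neg_div, neg_div, neg_lt_neg_iff,
    div_lt_div_iff₀ (by positivity) (by positivity)]
  nlinarith [mul_pos (sub_pos.mpr key) (show 0 < 1 + s by positivity)]

lemma xMPeta_lt_xMPO {q : ℝ} (hq : 0 < q) (hq2 : q ^ 2 < 2) : xMPeta q < xMPO q := by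
  have hr : √(16 - 16 * q ^ 2 + q ^ 4) < 4 - 2 * q ^ 2 := by
    rw [Real.sqrt_lt' (by linarith)]
    nlinarith [pow_pos hq 4]
  rw [xMPeta, xMPO, neg_div, neg_div, neg_lt_neg_iff, div_lt_div_iff₀ (by norm_num) (by positivity)]
  nlinarith

lemma xMPO_neg {q : ℝ} (hq : 0 < q) : xMPO q < 0 := by
  rw [xMPO]; linarith

/-- (Appendix A ordering of optimal force ratios) For `2√2/3 < q < 1` the six optimal force
ratios are strictly ordered `x_mdf < x_Mη < x_MEF < x_MΩ < x_MPη < x_MPO < 0`; equivalently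
`q/2 < |x_MPη| < |x_MΩ| < 3q/4 < q/(1 + √(1 − q²)) < q`, and consequently the Euclidean
distances of the corresponding points `(X₁, X₂)` from the equilibrium state `(0,0)` at
fixed `X₂` are strictly ordered in the same way. -/
theorem optimal_force_ratio_ordering (q : ℝ) (hq0 : 2 * Real.sqrt 2 / 3 < q) (hq1 : q < 1) :
    (xmdf q < xMeta q ∧ xMeta q < xMEF q ∧ xMEF q < xMOmega q ∧
      xMOmega q < xMPeta q ∧ xMPeta q < xMPO q ∧ xMPO q < 0) ∧
    (q / 2 < |xMPeta q| ∧ |xMPeta q| < |xMOmega q| ∧ |xMOmega q| < 3 * q / 4 ∧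
      3 * q / 4 < q / (1 + Real.sqrt (1 - q ^ 2)) ∧
      q / (1 + Real.sqrt (1 - q ^ 2)) < q) ∧
    (∀ L11 L22 X2 : ℝ, 0 < L11 → 0 < L22 → X2 ≠ 0 →
      distEq L11 L22 X2 (xMPO q) < distEq L11 L22 X2 (xMPeta q) ∧
      distEq L11 L22 X2 (xMPeta q) < distEq L11 L22 X2 (xMOmega q) ∧
      distEq L11 L22 X2 (xMOmega q) < distEq L11 L22 X2 (xMEF q) ∧
      distEq L11 L22 X2 (xMEF q) < distEq L11 L22 X2 (xMeta q) ∧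
      distEq L11 L22 X2 (xMeta q) < distEq L11 L22 X2 (xmdf q)) := by
  have hq : 0 < q := lt_trans (by positivity) hq0
  have h1 := xmdf_lt_xMeta hq hq1
  have h2 := xMeta_lt_xMEF hq0
  have h3 := xMEF_lt_xMOmega hq hq1
  have h4 := xMOmega_lt_xMPeta hq hq1
  have h5 := xMPeta_lt_xMPO hq (by nlinarith)
  have h6 := xMPO_neg hq
  have n5 := h5.trans h6
  have n4 := h4.trans n5
  have n3 := h3.trans n4
  have n2 := h2.trans n3
  have abs_chain : |xMPO q| < |xMPeta q| ∧ |xMPeta q| < |xMOmega q| ∧ |xMOmega q| < |xMEF q| ∧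
      |xMEF q| < |xMeta q| ∧ |xMeta q| < |xmdf q| :=
    ⟨abs_lt_abs_of_lt_of_neg h5 h6, abs_lt_abs_of_lt_of_neg h4 n5, abs_lt_abs_of_lt_of_neg h3 n4,
      abs_lt_abs_of_lt_of_neg h2 n3, abs_lt_abs_of_lt_of_neg h1 n2⟩
  have hMPO : |xMPO q| = q / 2 := by rw [abs_of_neg h6, xMPO]; ring
  have hMEF : |xMEF q| = 3 * q / 4 := by rw [abs_of_neg n3, xMEF]; ring
  have hMeta : |xMeta q| = q / (1 + √(1 - q ^ 2)) := by rw [abs_of_neg n2, xMeta]; ring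
  have hmdf : |xmdf q| = q := by rw [abs_of_neg (h1.trans n2), xmdf, neg_neg]
  refine ⟨⟨h1, h2, h3, h4, h5, h6⟩, by simpa only [hMPO, hMEF, hMeta, hmdf] using abs_chain, ?_⟩
  intro L11 L22 X2 h11 h22 hX
  obtain ⟨a1, a2, a3, a4, a5⟩ := abs_chain
  exact ⟨distEq_lt_distEq h11 h22 hX a1, distEq_lt_distEq h11 h22 hX a2,
    distEq_lt_distEq h11 h22 hX a3, distEq_lt_distEq h11 h22 hX a4, distEq_lt_distEq h11 h22 hX a5⟩
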